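/- For any integer n ≥ 3 and any noncomplete graph H, 2 ≤ γ_r(K_n∘H) ≤ 3. Furthermore, γ_r(K_n∘H) = 2 if and only if γ_r(H) = 2 or there exists a vertex a of H such that the subgraph of H induced by V(H)\N[a] is a clique. -/

import Mathlib

open Finset
open scoped Classical

/-- The lexicographic product of two simple graphs. -/
def lexProd {α β : Type*} (G : SimpleGraph α) (H : SimpleGraph β) :
    SimpleGraph (α × β) where
  Adj p q := G.Adj p.1 q.1 ∨ (p.1 = q.1 ∧ H.Adj p.2 q.2)
  symm := by
    constructor
    rintro ⟨a, b⟩ ⟨c, d⟩ (h | ⟨h1, h2⟩)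
    · exact Or.inl h.symm
    · exact Or.inr ⟨h1.symm, h2.symm⟩
  loopless := by
    constructor
    rintro ⟨a, b⟩ (h | ⟨h1, h2⟩)
    · exact G.irrefl h
    · exact H.irrefl h2

/-- A vertex `w` is undefended with respect to `g` if `g w = 0` and `g x = 0`
for every neighbour `x` of `w`. -/
def Undefended {α : Type*} (G : SimpleGraph α) (g : α → ℕ) (w : α) : Prop :=
  g w = 0 ∧ ∀ x, G.Adj w x → g x = 0

/-- A weak Roman dominating function. -/
def IsWRDF {α : Type*} (G : SimpleGraph α) (f : α → ℕ) : Prop :=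
  (∀ v, f v ≤ 2) ∧
    ∀ v, f v = 0 → ∃ u, G.Adj u v ∧ 1 ≤ f u ∧
      ∀ w, ¬ Undefended G (Function.update (Function.update f v 1) u (f u - 1)) w

/-- The weak Roman domination number. -/
noncomputable def weakRomanNumber {α : Type*} (G : SimpleGraph α) [Fintype α] : ℕ :=
  sInf {k | ∃ f : α → ℕ, IsWRDF G f ∧ ∑ v, f v = k}

/-- A dominating set. -/
def IsDomSet {α : Type*} (G : SimpleGraph α) (D : Finset α) : Prop :=
  ∀ v ∉ D, ∃ u ∈ D, G.Adj u v

/-- The domination number. -/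
noncomputable def domNumber {α : Type*} (G : SimpleGraph α) [Fintype α] : ℕ :=
  sInf {k | ∃ D : Finset α, IsDomSet G D ∧ D.card = k}

/-- A total dominating set. -/
def IsTotalDomSet {α : Type*} (G : SimpleGraph α) (S : Finset α) : Prop :=
  ∀ v, ∃ u ∈ S, G.Adj u v

/-- The total domination number. -/
noncomputable def totalDomNumber {α : Type*} (G : SimpleGraph α) [Fintype α] : ℕ :=
  sInf {k | ∃ S : Finset α, IsTotalDomSet G S ∧ S.card = k}

/-- A double total dominating set: every vertex has at least two neighbours in `S`. -/
def IsDoubleTotalDomSet {α : Type*} (G : SimpleGraph α) (S : Finset α) : Prop :=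
  ∀ v, ∃ u₁ ∈ S, ∃ u₂ ∈ S, u₁ ≠ u₂ ∧ G.Adj u₁ v ∧ G.Adj u₂ v

/-- The double total domination number. -/
noncomputable def doubleTotalDomNumber {α : Type*} (G : SimpleGraph α) [Fintype α] : ℕ :=
  sInf {k | ∃ S : Finset α, IsDoubleTotalDomSet G S ∧ S.card = k}

/-- A 2-packing: the closed neighbourhoods of distinct members are disjoint. -/
def IsTwoPacking {α : Type*} (G : SimpleGraph α) (X : Finset α) : Prop :=
  ∀ u ∈ X, ∀ v ∈ X, u ≠ v →
    ∀ w, ¬ ((w = u ∨ G.Adj u w) ∧ (w = v ∨ G.Adj v w))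

/-- The 2-packing number. -/
noncomputable def twoPackingNumber {α : Type*} (G : SimpleGraph α) [Fintype α] : ℕ :=
  sSup {k | ∃ X : Finset α, IsTwoPacking G X ∧ X.card = k}

/-- A secure dominating set. -/
def IsSecureDomSet {α : Type*} (G : SimpleGraph α) (S : Finset α) : Prop :=
  IsDomSet G S ∧ ∀ v ∉ S, ∃ u ∈ S, G.Adj u v ∧ IsDomSet G (insert v (S.erase u))

/-- The secure domination number. -/
noncomputable def secureDomNumber {α : Type*} (G : SimpleGraph α) [Fintype α] : ℕ :=
  sInf {k | ∃ S : Finset α, IsSecureDomSet G S ∧ S.card = k}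

/-- The corona product of two graphs. -/
def corona {α β : Type*} (G₁ : SimpleGraph α) (G₂ : SimpleGraph β) :
    SimpleGraph (α ⊕ α × β) where
  Adj x y :=
    match x, y with
    | .inl a, .inl a' => G₁.Adj a a'
    | .inl a, .inr p => a = p.1
    | .inr p, .inl a => p.1 = a
    | .inr p, .inr q => p.1 = q.1 ∧ G₂.Adj p.2 q.2
  symm := by
    constructor
    rintro (a | p) (a' | q) h
    · exact G₁.adj_symm h
    · exact h.symm
    · exact h.symm
    · exact ⟨h.1.symm, G₂.adj_symm h.2⟩
  loopless := by
    constructor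
    rintro (a | p) h
    · exact G₁.irrefl h
    · exact G₂.irrefl h.2

/-!
A WRDF of weight at most one leaves, after any move, all its weight on the defended vertex, so
that vertex must dominate the graph; hence a noncomplete graph has `γ_r ≥ 2`.

In `Kₙ ∘ H` a vertex is adjacent to every vertex outside its own column `{i} × V(H)`, so positive
weight in two different columns defends every vertex. Thus weight `1` on `(i, a)` for three
columns `i` is a WRDF, and `γ_r ≤ 3`. A WRDF of weight `2` either lives in one column, where it is
exactly a WRDF of `H`, or puts weight `1` on `(i, a)` and `(j, b)` with `i ≠ j`. In the latter
case a vertex `(i, b')` with `b' ∉ N[a]` can only be defended from `(j, b)`, after which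
`(i, c')`, `c' ∉ N[a]`, is defended only through an edge `b'c'`: so `V(H) \ N[a]` is a clique.
Conversely, if it is, weight `1` on `(i, a)` and `(j, a)` is a WRDF.
-/

section WeakRoman

variable {α : Type*} {G : SimpleGraph α} {f : α → ℕ}

/-- The function `f'` of the definition of a WRDF: `u` passes one unit of weight to `v`. -/
noncomputable def moveUnit (f : α → ℕ) (u v : α) : α → ℕ :=
  Function.update (Function.update f v 1) u (f u - 1)

def Defends (G : SimpleGraph α) (f : α → ℕ) (u v : α) : Prop :=
  G.Adj u v ∧ 1 ≤ f u ∧ ∀ w, ¬ Undefended G (moveUnit f u v) w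

theorem isWRDF_iff :
    IsWRDF G f ↔ (∀ v, f v ≤ 2) ∧ ∀ v, f v = 0 → ∃ u, Defends G f u v :=
  Iff.rfl

theorem moveUnit_apply_source (u v : α) : moveUnit f u v u = f u - 1 := by
  simp [moveUnit]

theorem moveUnit_apply_target {u v : α} (huv : u ≠ v) : moveUnit f u v v = 1 := by
  simp [moveUnit, huv.symm]

theorem moveUnit_apply_of_ne {u v w : α} (hu : w ≠ u) (hv : w ≠ v) :
    moveUnit f u v w = f w := by
  simp [moveUnit, hu, hv]

theorem not_undefended_of_adj {g : α → ℕ} {w x : α} (h : G.Adj w x) (hx : g x ≠ 0) :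
    ¬ Undefended G g w :=
  fun hw => hx (hw.2 x h)

theorem add_add_le_sum [Fintype α] {x y z : α} (hxy : x ≠ y) (hxz : x ≠ z) (hyz : y ≠ z) :
    f x + f y + f z ≤ ∑ p, f p :=
  calc f x + f y + f z = ∑ p ∈ {x, y, z}, f p := by
        rw [sum_insert (by simp [hxy, hxz]), sum_pair hyz, add_assoc]
    _ ≤ ∑ p, f p := sum_le_sum_of_subset (subset_univ _)

theorem add_le_sum_of_ne [Fintype α] {x y : α} (hxy : x ≠ y) : f x + f y ≤ ∑ p, f p :=
  Finset.add_le_sum (fun _ _ => Nat.zero_le _) (mem_univ x) (mem_univ y) hxy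

theorem exists_ne_ne_zero_of_lt_sum [Fintype α] {x : α} (h : f x < ∑ p, f p) :
    ∃ y, y ≠ x ∧ f y ≠ 0 := by
  by_contra! hall
  exact h.ne (sum_eq_single x (fun y _ hy => hall y hy) (by simp)).symm

/-- After the move the whole weight sits on `v`. -/
theorem IsWRDF.adj_of_sum_le_one [Fintype α] (hf : IsWRDF G f) (hsum : ∑ v, f v ≤ 1)
    {v : α} (hv : f v = 0) {w : α} (hwv : w ≠ v) : G.Adj v w := by
  obtain ⟨u, huv, hu, hdef⟩ := hf.2 v hv
  have hzero : ∀ x, x ≠ u → f x = 0 := fun x hx => by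
    have := add_le_sum_of_ne (f := f) hx
    omega
  have hu1 : f u ≤ 1 := (single_le_sum (fun _ _ => Nat.zero_le _) (mem_univ u)).trans hsum
  have hmoved : ∀ x, x ≠ v → moveUnit f u v x = 0 := fun x hx => by
    by_cases hxu : x = u
    · subst hxu; rw [moveUnit_apply_source]; omega
    · rw [moveUnit_apply_of_ne hxu hx, hzero x hxu]
  by_contra hvw
  refine hdef w ⟨hmoved w hwv, fun x hwx => hmoved x ?_⟩
  rintro rfl
  exact hvw hwx.symm

theorem IsWRDF.two_le_sum [Fintype α] (hf : IsWRDF G f) {a b : α} (hab : a ≠ b)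
    (hnadj : ¬ G.Adj a b) : 2 ≤ ∑ v, f v := by
  by_contra! hsum
  have hle : ∑ v, f v ≤ 1 := by omega
  have hfa : f a ≠ 0 := fun h => hnadj (hf.adj_of_sum_le_one hle h hab.symm)
  have hfb : f b ≠ 0 := fun h => hnadj (hf.adj_of_sum_le_one hle h hab).symm
  have := add_le_sum_of_ne (f := f) hab
  omega

theorem isWRDF_const_one (G : SimpleGraph α) : IsWRDF G (fun _ => 1) :=
  ⟨fun _ => by norm_num, fun _ h => absurd h one_ne_zero⟩

theorem exists_isWRDF_sum_eq_weakRomanNumber [Fintype α] (G : SimpleGraph α) :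
    ∃ f, IsWRDF G f ∧ ∑ v, f v = weakRomanNumber G := by
  unfold weakRomanNumber
  exact Nat.sInf_mem (s := {k | ∃ f, IsWRDF G f ∧ ∑ v, f v = k}) ⟨_, _, isWRDF_const_one G, rfl⟩

theorem weakRomanNumber_le_sum [Fintype α] (hf : IsWRDF G f) :
    weakRomanNumber G ≤ ∑ v, f v :=
  Nat.sInf_le ⟨f, hf, rfl⟩

theorem two_le_weakRomanNumber [Fintype α] {a b : α} (hab : a ≠ b) (hnadj : ¬ G.Adj a b) :
    2 ≤ weakRomanNumber G := by
  obtain ⟨f, hf, hsum⟩ := exists_isWRDF_sum_eq_weakRomanNumber G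
  exact hsum ▸ hf.two_le_sum hab hnadj

end WeakRoman

section LexProd

variable {α β : Type*} {G : SimpleGraph α} {H : SimpleGraph β}

theorem lexProd_adj_mk_left {i : α} {b c : β} : (lexProd G H).Adj (i, b) (i, c) ↔ H.Adj b c := by
  simp [lexProd]

theorem top_lexProd_adj_of_ne {p q : α × β} (h : p.1 ≠ q.1) : (lexProd ⊤ H).Adj p q :=
  Or.inl h

theorem Undefended.of_lexProd {g : α × β → ℕ} {i : α} {d : β}
    (h : Undefended (lexProd G H) g (i, d)) : Undefended H (fun e => g (i, e)) d :=
  ⟨h.1, fun e he => h.2 (i, e) (lexProd_adj_mk_left.2 he)⟩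

theorem Undefended.lexProd_of_support {g : α × β → ℕ} {i : α} {d : β}
    (hsupp : ∀ p : α × β, p.1 ≠ i → g p = 0) (h : Undefended H (fun e => g (i, e)) d) :
    Undefended (lexProd G H) g (i, d) := by
  refine ⟨h.1, fun ⟨k, e⟩ hadj => ?_⟩
  by_cases hk : k = i
  · subst hk
    exact h.2 e (lexProd_adj_mk_left.1 hadj)
  · exact hsupp _ hk

theorem moveUnit_mk_left (f : α × β → ℕ) (i : α) (x c : β) :
    (fun e => moveUnit f (i, x) (i, c) (i, e)) = moveUnit (fun e => f (i, e)) x c := by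
  funext e
  simp [moveUnit, Function.update_apply]

theorem not_undefended_top_lexProd {g : α × β → ℕ} {p q : α × β} (hpq : p.1 ≠ q.1)
    (hp : g p ≠ 0) (hq : g q ≠ 0) (w : α × β) : ¬ Undefended (lexProd ⊤ H) g w := by
  by_cases hw : w.1 = p.1
  · exact not_undefended_of_adj (top_lexProd_adj_of_ne (hw ▸ hpq)) hq
  · exact not_undefended_of_adj (top_lexProd_adj_of_ne hw) hp

theorem IsWRDF.of_lexProd_of_support {f : α × β → ℕ} (hf : IsWRDF (lexProd G H) f) {i : α}
    (hsupp : ∀ p : α × β, p.1 ≠ i → f p = 0) : IsWRDF H (fun b => f (i, b)) := by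
  refine isWRDF_iff.2 ⟨fun b => hf.1 _, fun c hc => ?_⟩
  obtain ⟨⟨k, x⟩, hadj, hu, hdef⟩ := (isWRDF_iff.1 hf).2 (i, c) hc
  obtain rfl : k = i := by
    by_contra hk
    have := hsupp (k, x) hk
    omega
  have hsupp' : ∀ p : α × β, p.1 ≠ k → moveUnit f (k, x) (k, c) p = 0 := fun p hp => by
    rw [moveUnit_apply_of_ne (by rintro rfl; exact hp rfl) (by rintro rfl; exact hp rfl),
      hsupp p hp]
  refine ⟨x, lexProd_adj_mk_left.1 hadj, hu, fun d hd => hdef (k, d) ?_⟩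
  rw [← moveUnit_mk_left] at hd
  exact hd.lexProd_of_support hsupp'

theorem sum_eq_sum_column [Fintype α] [Fintype β] {f : α × β → ℕ} {i : α}
    (hsupp : ∀ p : α × β, p.1 ≠ i → f p = 0) : ∑ p, f p = ∑ b, f (i, b) := by
  rw [Fintype.sum_prod_type]
  exact sum_eq_single i (fun k _ hk => sum_eq_zero fun b _ => hsupp (k, b) hk) (by simp)

theorem IsWRDF.isClique_compl_insert_neighborSet [Fintype α] [Fintype β] {f : α × β → ℕ}
    (hf : IsWRDF (lexProd ⊤ H) f) (hsum : ∑ p, f p = 2) {i j : α} (hij : i ≠ j) {a b : β}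
    (ha : f (i, a) ≠ 0) (hb : f (j, b) ≠ 0) : H.IsClique (insert a (H.neighborSet a))ᶜ := by
  have hp : ((i, a) : α × β) ≠ (j, b) := fun h => hij (congrArg Prod.fst h)
  have hfb : f (j, b) = 1 := by
    have := add_le_sum_of_ne (f := f) hp
    omega
  have hzero : ∀ z, z ≠ (i, a) → z ≠ (j, b) → f z = 0 := fun z hza hzb => by
    have := add_add_le_sum (f := f) hp hza.symm hzb.symm
    omega
  intro b' hb' c' hc' hne
  simp only [Set.mem_compl_iff, Set.mem_insert_iff, SimpleGraph.mem_neighborSet, not_or] at hb' hc'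
  have hvj : ((i, b') : α × β) ≠ (j, b) := fun h => hij (congrArg Prod.fst h)
  obtain ⟨u, hadj, hu, hdef⟩ := (isWRDF_iff.1 hf).2 (i, b') (hzero _ (by simpa using hb'.1) hvj)
  obtain rfl : u = (j, b) := by
    by_contra hub
    obtain rfl : u = (i, a) := by
      by_contra hua
      have := hzero u hua hub
      omega
    exact hb'.2 (lexProd_adj_mk_left.1 hadj)
  have hmoved : ∀ z, z ≠ (i, a) → z ≠ (i, b') → moveUnit f (j, b) (i, b') z = 0 :=
    fun z hza hzb => by
      by_cases hzj : z = (j, b)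
      · subst hzj
        rw [moveUnit_apply_source, hfb]
      · rw [moveUnit_apply_of_ne hzj hzb, hzero z hza hzj]
  by_contra hnadj
  refine hdef (i, c') ⟨hmoved _ (by simpa using hc'.1) (by simpa using hne.symm),
    fun z hz => hmoved z ?_ ?_⟩
  · rintro rfl
    exact hc'.2 (lexProd_adj_mk_left.1 hz).symm
  · rintro rfl
    exact hnadj (lexProd_adj_mk_left.1 hz).symm

noncomputable def columnLift (i : α) (g : β → ℕ) : α × β → ℕ :=
  fun p => if p.1 = i then g p.2 else 0

theorem columnLift_mk_left (i : α) (g : β → ℕ) : (fun b => columnLift i g (i, b)) = g := by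
  simp [columnLift]

theorem sum_columnLift [Fintype α] [Fintype β] (i : α) (g : β → ℕ) :
    ∑ p, columnLift i g p = ∑ b, g b := by
  rw [sum_eq_sum_column (f := columnLift i g) fun p hp => if_neg hp, columnLift_mk_left]

theorem IsWRDF.top_lexProd_columnLift [Fintype β] {g : β → ℕ} (hg : IsWRDF H g)
    (h2 : 2 ≤ ∑ b, g b) (i : α) :
    IsWRDF (lexProd ⊤ H) (columnLift i g) := by
  refine isWRDF_iff.2 ⟨fun p => ?_, fun ⟨j, c⟩ hv => ?_⟩
  · unfold columnLift
    split_ifs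
    exacts [hg.1 _, Nat.zero_le 2]
  by_cases hj : j = i
  · subst hj
    obtain ⟨x, hxc, hx, hdef⟩ := (isWRDF_iff.1 hg).2 c (by simpa [columnLift] using hv)
    refine ⟨(j, x), lexProd_adj_mk_left.2 hxc, by simpa [columnLift] using hx, fun ⟨k, d⟩ hw => ?_⟩
    by_cases hk : k = j
    · subst hk
      have := hw.of_lexProd
      rw [moveUnit_mk_left, columnLift_mk_left] at this
      exact hdef d this
    · refine not_undefended_of_adj (top_lexProd_adj_of_ne (p := (k, d)) (q := (j, c)) hk) ?_ hw
      rw [moveUnit_apply_target (by simpa using hxc.ne)]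
      exact one_ne_zero
  · obtain ⟨x, -, hx⟩ := exists_ne_zero_of_sum_ne_zero (by omega : ∑ b, g b ≠ 0)
    have hxv : ((i, x) : α × β) ≠ (j, c) := fun h => hj (congrArg Prod.fst h).symm
    refine ⟨(i, x), top_lexProd_adj_of_ne (Ne.symm hj),
      by simpa [columnLift] using Nat.one_le_iff_ne_zero.2 hx, ?_⟩
    obtain ⟨y, hy⟩ : ∃ y, moveUnit (columnLift i g) (i, x) (j, c) (i, y) ≠ 0 := by
      by_cases hx2 : 2 ≤ g x
      · refine ⟨x, ?_⟩
        rw [moveUnit_apply_source]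
        simp only [columnLift, if_true]
        omega
      · obtain ⟨y, hyx, hy⟩ := exists_ne_ne_zero_of_lt_sum (show g x < ∑ b, g b by omega)
        refine ⟨y, ?_⟩
        rw [moveUnit_apply_of_ne (by simpa using hyx) (fun h => hj (congrArg Prod.fst h).symm)]
        simpa [columnLift] using hy
    exact not_undefended_top_lexProd (p := (j, c)) hj
      (by rw [moveUnit_apply_target hxv]; exact one_ne_zero) hy

noncomputable def rowIndicator (T : Finset α) (a : β) : α × β → ℕ :=
  fun p => if p.1 ∈ T ∧ p.2 = a then 1 else 0

theorem rowIndicator_le_two (T : Finset α) (a : β) (p : α × β) : rowIndicator T a p ≤ 2 := by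
  unfold rowIndicator
  split_ifs <;> norm_num

theorem sum_rowIndicator [Fintype α] [Fintype β] (T : Finset α) (a : β) :
    ∑ p, rowIndicator T a p = T.card := by
  simp only [rowIndicator, Fintype.sum_prod_type, ite_and]
  simp

theorem rowIndicator_defends {T : Finset α} {a : β} {i k j : α} (hi : i ∈ T) (hk : k ∈ T)
    (hij : i ≠ j) (hkj : k ≠ j) (hik : i ≠ k) (c : β) :
    Defends (lexProd ⊤ H) (rowIndicator T a) (i, a) (j, c) := by
  have hiv : ((i, a) : α × β) ≠ (j, c) := fun h => hij (congrArg Prod.fst h)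
  refine ⟨top_lexProd_adj_of_ne hij, by simp [rowIndicator, hi], ?_⟩
  refine not_undefended_top_lexProd (p := (j, c)) (q := (k, a)) hkj.symm
    (by rw [moveUnit_apply_target hiv]; exact one_ne_zero) ?_
  rw [moveUnit_apply_of_ne (by simpa using hik.symm) (ne_of_apply_ne Prod.fst hkj)]
  simp [rowIndicator, hk]

theorem rowIndicator_isWRDF_of_three_le_card {T : Finset α} (hT : 3 ≤ T.card) (a : β) :
    IsWRDF (lexProd ⊤ H) (rowIndicator T a) := by
  refine isWRDF_iff.2 ⟨rowIndicator_le_two T a, fun ⟨j, c⟩ _ => ?_⟩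
  obtain ⟨i, hi, k, hk, hik⟩ := one_lt_card.1 (show 1 < (T.erase j).card by
    rw [card_erase_eq_ite]; split_ifs <;> omega)
  rw [mem_erase] at hi hk
  exact ⟨_, rowIndicator_defends hi.2 hk.2 hi.1 hk.1 hik c⟩

/-- The move leaves weight only on `(j, a)` and `(j, c)`, and these two vertices dominate
column `j` exactly because `V(H) \ N[a]` is a clique. -/
theorem rowIndicator_defends_of_isClique {T : Finset α} {a c : β} {j r : α}
    (hcl : H.IsClique (insert a (H.neighborSet a))ᶜ) (hj : j ∈ T) (hr : r ∈ T) (hrj : r ≠ j)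
    (hca : c ≠ a) (hac : ¬ H.Adj a c) :
    Defends (lexProd ⊤ H) (rowIndicator T a) (r, a) (j, c) := by
  have hrv : ((r, a) : α × β) ≠ (j, c) := fun h => hrj (congrArg Prod.fst h)
  have hja : moveUnit (rowIndicator T a) (r, a) (j, c) (j, a) ≠ 0 := by
    rw [moveUnit_apply_of_ne (by simpa using hrj.symm) (by simpa using hca.symm)]
    simp [rowIndicator, hj]
  have hjc : moveUnit (rowIndicator T a) (r, a) (j, c) (j, c) ≠ 0 := by
    rw [moveUnit_apply_target hrv]
    exact one_ne_zero
  refine ⟨top_lexProd_adj_of_ne hrj, by simp [rowIndicator, hr], fun ⟨k, d⟩ => ?_⟩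
  by_cases hk : k = j
  · subst hk
    by_cases hda : d = a
    · subst hda
      exact fun h => hja h.1
    by_cases had : H.Adj a d
    · exact not_undefended_of_adj (lexProd_adj_mk_left.2 had.symm) hja
    by_cases hdc : d = c
    · subst hdc
      exact fun h => hjc h.1
    have hcd : H.Adj c d := hcl (by simp [hca, hac]) (by simp [hda, had]) (Ne.symm hdc)
    exact not_undefended_of_adj (lexProd_adj_mk_left.2 hcd.symm) hjc
  · exact not_undefended_of_adj (top_lexProd_adj_of_ne (p := (k, d)) (q := (j, a)) hk) hja

theorem rowIndicator_isWRDF_of_isClique {T : Finset α} (hT : 2 ≤ T.card) {a : β}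
    (hcl : H.IsClique (insert a (H.neighborSet a))ᶜ) :
    IsWRDF (lexProd ⊤ H) (rowIndicator T a) := by
  refine isWRDF_iff.2 ⟨rowIndicator_le_two T a, fun ⟨j, c⟩ hv => ?_⟩
  by_cases hj : j ∈ T
  · have hca : c ≠ a := fun h => by simp [rowIndicator, hj, h] at hv
    obtain ⟨r, hr⟩ := card_pos.1 (show 0 < (T.erase j).card by rw [card_erase_of_mem hj]; omega)
    rw [mem_erase] at hr
    by_cases hac : H.Adj a c
    · refine ⟨(j, a), lexProd_adj_mk_left.2 hac, by simp [rowIndicator, hj], ?_⟩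
      refine not_undefended_top_lexProd (p := (j, c)) (q := (r, a)) (Ne.symm hr.1)
        (by rw [moveUnit_apply_target (by simpa using hca.symm)]; exact one_ne_zero) ?_
      rw [moveUnit_apply_of_ne (by simpa using hr.1) (ne_of_apply_ne Prod.fst hr.1)]
      simp [rowIndicator, hr.2]
    · exact ⟨_, rowIndicator_defends_of_isClique hcl hj hr.2 hr.1 hca hac⟩
  · obtain ⟨i, hi, k, hk, hik⟩ := one_lt_card.1 (show 1 < T.card by omega)
    exact ⟨_, rowIndicator_defends hi hk (by rintro rfl; exact hj hi)
      (by rintro rfl; exact hj hk) hik c⟩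

theorem IsWRDF.weakRomanNumber_eq_two_or_isClique [Fintype α] [Fintype β] {f : α × β → ℕ}
    (hf : IsWRDF (lexProd ⊤ H) f) (hsum : ∑ p, f p = 2) {a b : β} (hab : a ≠ b)
    (hnadj : ¬ H.Adj a b) :
    weakRomanNumber H = 2 ∨ ∃ a, H.IsClique (insert a (H.neighborSet a))ᶜ := by
  by_cases hcol : ∃ i, ∀ p : α × β, p.1 ≠ i → f p = 0
  · obtain ⟨i, hsupp⟩ := hcol
    have hres := hf.of_lexProd_of_support hsupp
    rw [sum_eq_sum_column hsupp] at hsum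
    exact Or.inl (le_antisymm (hsum ▸ weakRomanNumber_le_sum hres)
      (two_le_weakRomanNumber hab hnadj))
  · push Not at hcol
    obtain ⟨⟨i, a'⟩, -, hp⟩ := exists_ne_zero_of_sum_ne_zero (by omega : ∑ p, f p ≠ 0)
    obtain ⟨⟨j, b'⟩, hji, hq⟩ := hcol i
    exact Or.inr ⟨a', hf.isClique_compl_insert_neighborSet hsum (Ne.symm hji) hp hq⟩

end LexProd

/-- For `n ≥ 3` and a noncomplete graph `H`,
`2 ≤ γ_r(K_n∘H) ≤ 3`, and `γ_r(K_n∘H) = 2` iff `γ_r(H) = 2` or some vertex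
`a` of `H` is such that the subgraph induced by `V(H) \ N[a]` is a clique. -/
theorem weakRoman_lexProd_completeGraph {β : Type*} [Fintype β]
    (n : ℕ) (hn : 3 ≤ n) (H : SimpleGraph β)
    (hH : ∃ a b : β, a ≠ b ∧ ¬ H.Adj a b) :
    (2 ≤ weakRomanNumber (lexProd (⊤ : SimpleGraph (Fin n)) H) ∧
      weakRomanNumber (lexProd (⊤ : SimpleGraph (Fin n)) H) ≤ 3) ∧
    (weakRomanNumber (lexProd (⊤ : SimpleGraph (Fin n)) H) = 2 ↔
      (weakRomanNumber H = 2 ∨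
        ∃ a : β, ∀ b c : β, ¬ (b = a ∨ H.Adj a b) → ¬ (c = a ∨ H.Adj a c) →
          b ≠ c → H.Adj b c)) := by
  obtain ⟨a, b, hab, hnadj⟩ := hH
  set K := lexProd (⊤ : SimpleGraph (Fin n)) H
  obtain ⟨T, -, hT⟩ := exists_subset_card_eq (s := (univ : Finset (Fin n))) (by simpa using hn)
  have hlower : 2 ≤ weakRomanNumber K :=
    two_le_weakRomanNumber (a := (⟨0, by omega⟩, a)) (b := (⟨0, by omega⟩, b))
      (by simpa using hab) (by rwa [lexProd_adj_mk_left])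
  have hupper : weakRomanNumber K ≤ 3 := by
    simpa [sum_rowIndicator, hT] using
      weakRomanNumber_le_sum (rowIndicator_isWRDF_of_three_le_card (H := H) hT.ge a)
  refine ⟨⟨hlower, hupper⟩, fun h2 => ?_, fun h => le_antisymm ?_ hlower⟩
  · obtain ⟨f, hf, hsum⟩ := exists_isWRDF_sum_eq_weakRomanNumber K
    obtain hH2 | ⟨c, hcl⟩ := hf.weakRomanNumber_eq_two_or_isClique (hsum.trans h2) hab hnadj
    exacts [Or.inl hH2, Or.inr ⟨c, fun _ _ hb hc => hcl hb hc⟩]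
  rcases h with hH2 | ⟨c, hcl⟩
  · obtain ⟨g, hg, hsum⟩ := exists_isWRDF_sum_eq_weakRomanNumber H
    have hlift := hg.top_lexProd_columnLift (hsum.trans hH2).ge (⟨0, by omega⟩ : Fin n)
    simpa [sum_columnLift, hsum, hH2] using weakRomanNumber_le_sum hlift
  · obtain ⟨T₂, -, hT₂⟩ := exists_subset_card_eq (s := T) (n := 2) (by omega)
    have hind := rowIndicator_isWRDF_of_isClique (a := c) hT₂.ge fun _ hb _ hc => hcl _ _ hb hc
    simpa [sum_rowIndicator, hT₂] using weakRomanNumber_le_sum hind
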